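/- Let A ⊆ B be finite sets of positive integers. Suppose M = (M₁, …, M_k) is any list of pairwise disjoint subsets of A whose union is A, such that (i) the blocks are increasing, i.e., for i < j every element of M_i is less than every element of M_j; (ii) if A = ∅, then k = #B + 1; and if A ≠ ∅ with elements a₁ < ⋯ < a_m, then the number of blocks strictly preceding the block containing a₁ equals #{b ∈ B : b < a₁}, for each consecutive pair a_i < a_{i+1} the difference of the indices of their blocks equals #{b ∈ B : a_i < b < a_{i+1}}, and the number of blocks strictly following the block containing a_m equals #{b ∈ B : b > a_m}. Then M equals the embedding partition EP_B(A). In particular, the embedding partition of A in B is the unique partition of A with these properties. -/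

import Mathlib

/-!
Both lists are governed by the rank `r(a) = #{b ∈ B \ A | b < a}`. Between consecutive elements of
`A`, below its minimum and above its maximum there are no elements of `A`, so the counts of `B` in the
hypotheses are counts of `B \ A`; by induction along `A` they force `a` to lie in block `r(a)` of `M`,
and `M` to have `#(B \ A) + 1` blocks. In `EP_B(A)` the element `a ∉ B \ A` lies in block `i` iff
`d_{i-1} < a < d_i`, which is again `r(a) = i`: the dividers are `Nat.nth (· ∈ B \ A)` and `r` is
`Nat.count (· ∈ B \ A)`.
-/

/-- The dividers: the elements of `B \ A` listed in increasing order,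
    `d₁ < d₂ < ⋯ < d_s` (0-indexed here). -/
def EPdividers (A B : Finset ℕ) : List ℕ := (B \ A).sort (· ≤ ·)

/-- The embedding partition `EP_B(A)`: the list `(L₁, …, L_{s+1})` of subsets of `A`,
    where (0-indexed) `L_i = {a ∈ A : d_{i-1} < a < d_i}` with the conventions
    `d₀ = 0` and `d_{s+1} = ∞`. -/
def EP (A B : Finset ℕ) : List (Finset ℕ) :=
  (List.range ((EPdividers A B).length + 1)).map (fun i =>
    A.filter (fun a =>
      (if i = 0 then 0 else (EPdividers A B).getD (i - 1) 0) < a ∧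
      (i = (EPdividers A B).length ∨ a < (EPdividers A B).getD i 0)))

open Finset

namespace Finset

variable {α : Type*}

section LinearOrder

variable [LinearOrder α]

theorem filter_sdiff_eq_of_forall_not {A B : Finset α} {p : α → Prop} [DecidablePred p]
    (h : ∀ x ∈ A, ¬p x) : {b ∈ B \ A | p b} = {b ∈ B | p b} := by
  ext b
  simp only [mem_filter, mem_sdiff]
  exact ⟨fun ⟨⟨hb, _⟩, hp⟩ => ⟨hb, hp⟩, fun ⟨hb, hp⟩ => ⟨⟨hb, fun hbA => h b hbA hp⟩, hp⟩⟩

theorem card_filter_lt_eq_add {D : Finset α} {a' a : α} (ha' : a' ∉ D) (h : a' < a) :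
    #{b ∈ D | b < a} = #{b ∈ D | b < a'} + #{b ∈ D | a' < b ∧ b < a} := by
  rw [← card_filter_add_card_filter_not (s := {b ∈ D | b < a}) (· < a'), filter_filter,
    filter_filter]
  congr 2 <;> refine filter_congr fun b hb => ?_
  · exact ⟨And.right, fun hba' => ⟨hba'.trans h, hba'⟩⟩
  · rw [not_lt, le_iff_lt_or_eq, or_iff_left (ne_of_mem_of_not_mem hb ha').symm, and_comm]

theorem card_filter_lt_add_card_filter_gt {D : Finset α} {a : α} (ha : a ∉ D) :
    #{b ∈ D | b < a} + #{b ∈ D | a < b} = #D := by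
  rw [← card_filter_add_card_filter_not (s := D) (· < a)]
  congr 2
  refine filter_congr fun b hb => ?_
  rw [not_lt, le_iff_lt_or_eq, or_iff_left (ne_of_mem_of_not_mem hb ha).symm]

theorem forall_le_or_exists_pred (A : Finset α) (a : α) :
    (∀ x ∈ A, a ≤ x) ∨ ∃ a' ∈ A, a' < a ∧ ∀ x ∈ A, ¬(a' < x ∧ x < a) := by
  by_cases hlow : ∃ x ∈ A, x < a
  · right
    obtain ⟨x, hx, hxa⟩ := hlow
    have hne : ({x ∈ A | x < a} : Finset α).Nonempty := ⟨x, mem_filter.2 ⟨hx, hxa⟩⟩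
    obtain ⟨ha'A, ha'a⟩ := mem_filter.1 (max'_mem _ hne)
    refine ⟨_, ha'A, ha'a, fun y hy ⟨hy₁, hy₂⟩ => ?_⟩
    exact (le_max' _ y (mem_filter.2 ⟨hy, hy₂⟩)).not_gt hy₁
  · push Not at hlow
    exact .inl hlow

end LinearOrder

theorem mem_foldr_union [DecidableEq α] {L : List (Finset α)} {x : α} :
    x ∈ L.foldr (· ∪ ·) ∅ ↔ ∃ t ∈ L, x ∈ t := by
  induction L with
  | nil => simp
  | cons t L ih => simp [ih]

theorem mem_getD_empty_iff {L : List (Finset α)} {i : ℕ} {x : α} :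
    x ∈ L.getD i ∅ ↔ ∃ h : i < L.length, x ∈ L[i] := by
  rcases lt_or_ge i L.length with h | h <;> simp [h]

theorem mem_iff_exists_mem_getD [DecidableEq α] {A : Finset α} {M : List (Finset α)}
    (hunion : M.foldr (· ∪ ·) ∅ = A) {x : α} : x ∈ A ↔ ∃ i, x ∈ M.getD i ∅ := by
  simp only [← hunion, mem_foldr_union, mem_getD_empty_iff, List.mem_iff_getElem]
  grind

end Finset

namespace Nat

theorem count_mem_eq_card_filter_lt (D : Finset ℕ) (n : ℕ) :
    count (· ∈ D) n = #{b ∈ D | b < n} := by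
  rw [count_eq_card_filter_range]
  congr 1
  ext b
  simp [and_comm]

theorem finite_ofPred_mem (D : Finset ℕ) : (Set.ofPred (· ∈ D)).Finite := D.finite_toSet

@[simp]
theorem finite_ofPred_mem_toFinset (D : Finset ℕ) : (finite_ofPred_mem D).toFinset = D :=
  finite_toSet_toFinset D

theorem nth_mem_eq_getD_sort (D : Finset ℕ) (j : ℕ) :
    nth (· ∈ D) j = (D.sort (· ≤ ·)).getD j 0 := by
  rw [nth_eq_getD_sort (finite_ofPred_mem D), finite_ofPred_mem_toFinset]

theorem count_mem_eq_iff {D : Finset ℕ} {a i : ℕ} (ha : a ∉ D) (hi : i ≤ #D) :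
    count (· ∈ D) a = i ↔
      (i = 0 ∨ nth (· ∈ D) (i - 1) < a) ∧ (i = #D ∨ a < nth (· ∈ D) i) := by
  have hf := finite_ofPred_mem D
  have hle : count (· ∈ D) a ≤ #D := by simpa using count_le_card hf a
  constructor
  · rintro rfl
    refine ⟨?_, ?_⟩
    · rcases eq_or_ne (count (· ∈ D) a) 0 with h | h
      · exact .inl h
      · exact .inr (nth_lt_of_lt_count (by omega))
    · refine (eq_or_lt_of_le hle).imp id fun hlt => ?_
      have hlt' : count (· ∈ D) a < #hf.toFinset := by simpa using hlt
      have hmem : nth (· ∈ D) (count (· ∈ D) a) ∈ D := nth_mem_of_lt_card hf hlt'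
      by_contra! hge
      have := count_strict_mono hmem (lt_of_le_of_ne hge (ne_of_mem_of_not_mem hmem ha))
      rw [count_nth_of_lt_card_finite hf hlt'] at this
      exact this.false
  · rintro ⟨hlo, hhi⟩
    refine le_antisymm ?_ ?_
    · rcases hhi with rfl | hhi
      · exact hle
      · exact le_nth_of_count_le hhi.le
    · rcases i.eq_zero_or_pos with rfl | hipos
      · exact zero_le _
      · have hlo := hlo.resolve_left hipos.ne'
        have hlt' : i - 1 < #hf.toFinset := by simp; omega
        have := count_strict_mono (nth_mem_of_lt_card hf hlt') hlo
        rw [count_nth_of_lt_card_finite hf hlt'] at this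
        omega

end Nat

section BlockIndex

variable {A B : Finset ℕ} {M : List (Finset ℕ)}

theorem eq_count_of_mem_getD (hunion : M.foldr (· ∪ ·) ∅ = A)
    (hinc : ∀ i j : ℕ, i < j → j < M.length →
      ∀ x ∈ M.getD i ∅, ∀ y ∈ M.getD j ∅, x < y)
    (hmin : ∀ (hA : A.Nonempty), ∀ i < M.length, A.min' hA ∈ M.getD i ∅ →
      i = (B.filter (fun b => b < A.min' hA)).card)
    (hcons : ∀ a ∈ A, ∀ a' ∈ A, a < a' → (∀ x ∈ A, ¬(a < x ∧ x < a')) →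
      ∀ i < M.length, ∀ j < M.length, a ∈ M.getD i ∅ → a' ∈ M.getD j ∅ →
        j - i = (B.filter (fun b => a < b ∧ b < a')).card)
    (a i : ℕ) (hai : a ∈ M.getD i ∅) : i = Nat.count (· ∈ B \ A) a := by
  induction a using Nat.strong_induction_on generalizing i with
  | _ a ih =>
  have ha : a ∈ A := (mem_iff_exists_mem_getD hunion).2 ⟨i, hai⟩
  obtain ⟨hi, -⟩ := mem_getD_empty_iff.1 hai
  rw [Nat.count_mem_eq_card_filter_lt]
  rcases A.forall_le_or_exists_pred a with hle | ⟨a', ha', ha'a, hgap⟩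
  · have hmin_eq : A.min' ⟨a, ha⟩ = a := le_antisymm (A.min'_le a ha) (A.le_min' _ a hle)
    have hbefore := hmin ⟨a, ha⟩ i hi (by rwa [hmin_eq])
    rwa [hmin_eq, ← filter_sdiff_eq_of_forall_not fun x hx => (hle x hx).not_gt] at hbefore
  · obtain ⟨i', hai'⟩ := (mem_iff_exists_mem_getD hunion).1 ha'
    obtain ⟨hi', -⟩ := mem_getD_empty_iff.1 hai'
    -- `hcons` is stated with truncated subtraction, so the order of the blocks is needed here
    have hi'i : i' ≤ i := not_lt.1 fun h => (hinc i i' h hi' a hai a' hai').not_gt ha'a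
    have hstep := hcons a' ha' a ha ha'a hgap i' hi' i hi hai' hai
    rw [← filter_sdiff_eq_of_forall_not hgap] at hstep
    rw [card_filter_lt_eq_add (notMem_sdiff_of_mem_right ha') ha'a,
      ← Nat.count_mem_eq_card_filter_lt, ← ih a' ha'a i' hai']
    omega

theorem length_eq_card_sdiff_add_one (hunion : M.foldr (· ∪ ·) ∅ = A)
    (hempty : A = ∅ → M.length = B.card + 1)
    (hmax : ∀ (hA : A.Nonempty), ∀ i < M.length, A.max' hA ∈ M.getD i ∅ →
      M.length - 1 - i = (B.filter (fun b => A.max' hA < b)).card)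
    (hidx : ∀ a i, a ∈ M.getD i ∅ → i = Nat.count (· ∈ B \ A) a) :
    M.length = #(B \ A) + 1 := by
  rcases A.eq_empty_or_nonempty with rfl | hA
  · simpa using hempty rfl
  · have hm := A.max'_mem hA
    obtain ⟨i, hi⟩ := (mem_iff_exists_mem_getD hunion).1 hm
    obtain ⟨hiM, -⟩ := mem_getD_empty_iff.1 hi
    have hafter := hmax hA i hiM hi
    rw [← filter_sdiff_eq_of_forall_not fun x hx => (A.le_max' x hx).not_gt] at hafter
    have hbefore := hidx _ i hi
    rw [Nat.count_mem_eq_card_filter_lt] at hbefore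
    have := card_filter_lt_add_card_filter_gt (D := B \ A) (notMem_sdiff_of_mem_right hm)
    omega

theorem getElem_eq_filter_count (hunion : M.foldr (· ∪ ·) ∅ = A)
    (hidx : ∀ a i, a ∈ M.getD i ∅ → i = Nat.count (· ∈ B \ A) a) (i : ℕ) (hi : i < M.length) :
    M[i] = {a ∈ A | Nat.count (· ∈ B \ A) a = i} := by
  ext a
  rw [mem_filter]
  constructor
  · intro ha
    have hai : a ∈ M.getD i ∅ := mem_getD_empty_iff.2 ⟨hi, ha⟩
    exact ⟨(mem_iff_exists_mem_getD hunion).2 ⟨i, hai⟩, (hidx a i hai).symm⟩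
  · rintro ⟨ha, rfl⟩
    obtain ⟨j, haj⟩ := (mem_iff_exists_mem_getD hunion).1 ha
    obtain rfl := hidx a j haj
    exact (mem_getD_empty_iff.1 haj).2

end BlockIndex

theorem EP_length (A B : Finset ℕ) : (EP A B).length = #(B \ A) + 1 := by
  simp [EP, EPdividers]

theorem EP_getElem {A B : Finset ℕ} (hpos : ∀ a ∈ A, 0 < a) {i : ℕ} (hi : i < (EP A B).length) :
    (EP A B)[i] = {a ∈ A | Nat.count (· ∈ B \ A) a = i} := by
  have hi' : i ≤ #(B \ A) := by rw [EP_length] at hi; omega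
  simp only [EP, EPdividers, List.getElem_map, List.getElem_range, length_sort,
    ← Nat.nth_mem_eq_getD_sort]
  refine filter_congr fun a ha => ?_
  rw [Nat.count_mem_eq_iff (notMem_sdiff_of_mem_right ha) hi']
  rcases i.eq_zero_or_pos with rfl | hipos
  · simp [hpos a ha]
  · simp [hipos.ne']

theorem stmt_5_general (A B : Finset ℕ) (hAB : A ⊆ B) (hpos : ∀ b ∈ B, 0 < b)
    (M : List (Finset ℕ))
    (hunion : M.foldr (· ∪ ·) ∅ = A)
    (hinc : ∀ i j : ℕ, i < j → j < M.length →
      ∀ x ∈ M.getD i ∅, ∀ y ∈ M.getD j ∅, x < y)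
    (hempty : A = ∅ → M.length = B.card + 1)
    (hmin : ∀ (hA : A.Nonempty), ∀ i < M.length, A.min' hA ∈ M.getD i ∅ →
      i = (B.filter (fun b => b < A.min' hA)).card)
    (hcons : ∀ a ∈ A, ∀ a' ∈ A, a < a' → (∀ x ∈ A, ¬(a < x ∧ x < a')) →
      ∀ i < M.length, ∀ j < M.length, a ∈ M.getD i ∅ → a' ∈ M.getD j ∅ →
        j - i = (B.filter (fun b => a < b ∧ b < a')).card)
    (hmax : ∀ (hA : A.Nonempty), ∀ i < M.length, A.max' hA ∈ M.getD i ∅ →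
      M.length - 1 - i = (B.filter (fun b => A.max' hA < b)).card) :
    M = EP A B := by
  have hidx := eq_count_of_mem_getD hunion hinc hmin hcons
  have hlen := length_eq_card_sdiff_add_one hunion hempty hmax hidx
  refine List.ext_getElem (by rw [hlen, EP_length]) fun i hiM hiEP => ?_
  rw [getElem_eq_filter_count hunion hidx i hiM, EP_getElem (fun a ha => hpos a (hAB ha)) hiEP]

/-- Uniqueness of the embedding partition: any list `M` of pairwise disjoint subsets of `A`
    with union `A`, whose blocks are increasing, and which satisfies the divider-counting
    properties (with respect to `B`) for the empty case, the minimum, consecutive pairs,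
    and the maximum, must equal `EP_B(A)`. -/
theorem stmt_5 (A B : Finset ℕ) (hAB : A ⊆ B) (hpos : ∀ b ∈ B, 0 < b)
    (M : List (Finset ℕ))
    (hdisj : List.Pairwise Disjoint M)
    (hunion : M.foldr (· ∪ ·) ∅ = A)
    (hinc : ∀ i j : ℕ, i < j → j < M.length →
      ∀ x ∈ M.getD i ∅, ∀ y ∈ M.getD j ∅, x < y)
    (hempty : A = ∅ → M.length = B.card + 1)
    (hmin : ∀ (hA : A.Nonempty), ∀ i < M.length, A.min' hA ∈ M.getD i ∅ →
      i = (B.filter (fun b => b < A.min' hA)).card)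
    (hcons : ∀ a ∈ A, ∀ a' ∈ A, a < a' → (∀ x ∈ A, ¬(a < x ∧ x < a')) →
      ∀ i < M.length, ∀ j < M.length, a ∈ M.getD i ∅ → a' ∈ M.getD j ∅ →
        j - i = (B.filter (fun b => a < b ∧ b < a')).card)
    (hmax : ∀ (hA : A.Nonempty), ∀ i < M.length, A.max' hA ∈ M.getD i ∅ →
      M.length - 1 - i = (B.filter (fun b => A.max' hA < b)).card) :
    M = EP A B :=
  stmt_5_general A B hAB hpos M hunion hinc hempty hmin hcons hmax
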